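/- arXiv:2209.00530 — 2 statements merged into one kernel-verified Lean document; each statement's English description precedes it below -/
import Mathlib

section
/- Let r > 0, let f : ℂ → ℂ be complex-differentiable on an open set U ⊆ ℂ containing the closed disk {z : ℂ | ‖z‖ ≤ r}, and for each natural number N ≥ 2 define ∇̂(N) = (1/(N·r)) · Σ_{k=0}^{N−1} f(r·exp(2πi k / N))·exp(−2πi k / N). Then ∇̂(N) converges to deriv f 0 as N → ∞ (i.e. Tendsto (fun N => ∇̂(N)) atTop (nhds (deriv f 0))). -/
/-!
Expand `f` in its Taylor series `f y = ∑ aₙ yⁿ`, which converges absolutely on the closed disk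
of radius `r` because `f` is holomorphic on a slightly larger disk. Averaging `yⁿ / y` over the
points `y = r ωᵏ`, `ω = exp (2πi/N)`, gives `rⁿ⁻¹` when `N ∣ n - 1` and `0` otherwise, so the
estimator equals `∑ₘ a_{mN+1} r^{mN}`. Its bias `∑_{m ≥ 1} a_{mN+1} r^{mN}` is bounded by the
tail `∑_{n ≥ N} ‖aₙ₊₁‖ rⁿ` of an absolutely convergent series, hence tends to `0`.
-/

open scoped Real NNReal ENNReal Topology
open Filter Finset Metric

theorem IsPrimitiveRoot.sum_pow_zpow_eq_ite {K : Type*} [Field K] {ζ : K} {N : ℕ}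
    (hζ : IsPrimitiveRoot ζ N) (m : ℤ) :
    ∑ k ∈ range N, (ζ ^ m) ^ k = if (N : ℤ) ∣ m then (N : K) else 0 := by
  split_ifs with hdvd
  · simp [(hζ.zpow_eq_one_iff_dvd m).mpr hdvd]
  · have hne : ζ ^ m ≠ 1 := fun h => hdvd ((hζ.zpow_eq_one_iff_dvd m).mp h)
    have hpow : (ζ ^ m) ^ N = 1 := by
      rw [← zpow_natCast, ← zpow_mul, mul_comm, zpow_mul, zpow_natCast, hζ.pow_eq_one, one_zpow]
    rw [geom_sum_eq hne, hpow, sub_self, zero_div]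

/-- Riemann sum of the Cauchy formula `f' 0 = (2πi)⁻¹ ∮_{|z| = r} f z / z² dz` at the points
`r ω ^ k`, `k < N`. -/
noncomputable def circleDerivEstimate (F : ℂ → ℂ) (r ω : ℂ) (N : ℕ) : ℂ :=
  1 / (N * r) * ∑ k ∈ range N, F (r * ω ^ k) * (ω ^ k)⁻¹

theorem circleDerivEstimate_term_eq_ite {r ω : ℂ} {N : ℕ} (hr : r ≠ 0)
    (hω : IsPrimitiveRoot ω N) (hN : N ≠ 0) (a : ℂ) (n : ℕ) :
    1 / (N * r) * ∑ k ∈ range N, a * (r * ω ^ k) ^ n * (ω ^ k)⁻¹ =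
      if (N : ℤ) ∣ (n : ℤ) - 1 then a * r ^ n / r else 0 := by
  have hω0 : ω ≠ 0 := hω.ne_zero hN
  have hterm : ∀ k : ℕ,
      a * (r * ω ^ k) ^ n * (ω ^ k)⁻¹ = a * r ^ n * (ω ^ ((n : ℤ) - 1)) ^ k := by
    intro k
    rw [zpow_sub₀ hω0, zpow_natCast, zpow_one, div_pow, mul_pow, ← pow_mul, ← pow_mul, mul_comm n k]
    field_simp
  rw [sum_congr rfl fun k _ => hterm k, ← mul_sum, hω.sum_pow_zpow_eq_ite]
  split_ifs
  · field_simp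
  · simp

theorem exists_eq_mul_add_one_of_dvd_sub_one {N n : ℕ} (hN : 2 ≤ N) (h : (N : ℤ) ∣ (n : ℤ) - 1) :
    ∃ m, m * N + 1 = n := by
  obtain _ | n := n
  · have := Int.le_of_dvd one_pos (dvd_neg.mpr h)
    omega
  · obtain ⟨m, rfl⟩ := Int.natCast_dvd_natCast.mp (by simpa using h)
    exact ⟨m, by ring⟩

theorem hasSum_circleDerivEstimate {a : ℕ → ℂ} {F : ℂ → ℂ} {r ω : ℂ} {N : ℕ} (hr : r ≠ 0)
    (hN : 2 ≤ N) (hω : IsPrimitiveRoot ω N)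
    (hF : ∀ k, HasSum (fun n => a n * (r * ω ^ k) ^ n) (F (r * ω ^ k))) :
    HasSum (fun m => a (m * N + 1) * r ^ (m * N)) (circleDerivEstimate F r ω N) := by
  have hsum : HasSum (fun n : ℕ => if (N : ℤ) ∣ (n : ℤ) - 1 then a n * r ^ n / r else 0)
      (circleDerivEstimate F r ω N) := by
    simp_rw [← circleDerivEstimate_term_eq_ite hr hω (by omega)]
    exact (hasSum_sum fun k _ => (hF k).mul_right _).mul_left _
  have hinj : Function.Injective fun m => m * N + 1 := fun m m' h =>
    Nat.eq_of_mul_eq_mul_right (by omega) (Nat.add_right_cancel h)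
  rw [← hinj.hasSum_iff] at hsum
  · convert hsum using 2 with m
    simp [pow_succ, mul_div_assoc, hr]
  · intro n hn
    rw [if_neg]
    exact fun h => hn (exists_eq_mul_add_one_of_dvd_sub_one hN h)

theorem circleDerivEstimate_sub_eq_tsum {a : ℕ → ℂ} {F : ℂ → ℂ} {r ω : ℂ} {N : ℕ} (hr : r ≠ 0)
    (hN : 2 ≤ N) (hω : IsPrimitiveRoot ω N)
    (hF : ∀ k, HasSum (fun n => a n * (r * ω ^ k) ^ n) (F (r * ω ^ k))) :
    circleDerivEstimate F r ω N - a 1 = ∑' m, a ((m + 1) * N + 1) * r ^ ((m + 1) * N) := by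
  have h := (hasSum_nat_add_iff' 1).mpr (hasSum_circleDerivEstimate hr hN hω hF)
  simpa using h.tsum_eq.symm

theorem norm_tsum_comp_succ_mul_le {E : Type*} [SeminormedAddCommGroup E] {c : ℕ → E}
    (hc : Summable fun n => ‖c n‖) {N : ℕ} (hN : N ≠ 0) :
    ‖∑' m, c ((m + 1) * N)‖ ≤ ∑' k, ‖c (k + N)‖ := by
  have hinj : Function.Injective fun m => (m + 1) * N := fun m m' h =>
    by simpa using Nat.eq_of_mul_eq_mul_right (Nat.pos_of_ne_zero hN) h
  have hsub : Summable fun m => ‖c ((m + 1) * N)‖ := hc.comp_injective hinj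
  calc ‖∑' m, c ((m + 1) * N)‖ ≤ ∑' m, ‖c ((m + 1) * N)‖ := norm_tsum_le_tsum_norm hsub
    _ ≤ ∑' k, ‖c (k + N)‖ := by
      refine hsub.tsum_le_tsum_of_inj (· * N) (fun m m' h => ?_) (fun _ _ => norm_nonneg _)
        (fun m => by rw [add_mul, one_mul]) ((summable_nat_add_iff N).mpr hc)
      exact Nat.eq_of_mul_eq_mul_right (Nat.pos_of_ne_zero hN) h

theorem tendsto_tsum_comp_succ_mul_atTop_zero {E : Type*} [SeminormedAddCommGroup E]
    {c : ℕ → E} (hc : Summable fun n => ‖c n‖) :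
    Tendsto (fun N => ∑' m, c ((m + 1) * N)) atTop (𝓝 0) := by
  refine squeeze_zero_norm' ?_ (tendsto_sum_nat_add fun n => ‖c n‖)
  filter_upwards [eventually_ne_atTop 0] with N hN
  exact norm_tsum_comp_succ_mul_le hc hN

theorem exists_hasFPowerSeriesOnBall_of_closedBall_subset {E : Type*} [NormedAddCommGroup E]
    [NormedSpace ℂ E] [CompleteSpace E] {f : ℂ → E} {U : Set ℂ} {c : ℂ} {r : ℝ}
    (hU : IsOpen U) (hr : 0 ≤ r) (hsub : closedBall c r ⊆ U) (hf : DifferentiableOn ℂ f U) :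
    ∃ (p : FormalMultilinearSeries ℂ ℂ E) (R : ℝ≥0), r < R ∧ HasFPowerSeriesOnBall f p c R := by
  obtain ⟨δ, hδ, hthick⟩ := (isCompact_closedBall c r).exists_thickening_subset_open hU hsub
  rw [thickening_closedBall hδ hr] at hthick
  let R : ℝ≥0 := ⟨δ / 2 + r, by positivity⟩
  have hR : (R : ℝ) = δ / 2 + r := rfl
  refine ⟨_, R, by linarith, DifferentiableOn.hasFPowerSeriesOnBall (hf.mono ?_) ?_⟩
  · exact (closedBall_subset_ball (by linarith)).trans hthick
  · rw [← NNReal.coe_pos, hR]; positivity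

theorem exists_hasSum_coeff_mul_pow_of_closedBall_subset {f : ℂ → ℂ} {U : Set ℂ} {c : ℂ} {r : ℝ}
    (hU : IsOpen U) (hr : 0 ≤ r) (hsub : closedBall c r ⊆ U) (hf : DifferentiableOn ℂ f U) :
    ∃ a : ℕ → ℂ, Summable (fun n => ‖a n‖ * r ^ n) ∧
      (∀ y, ‖y‖ ≤ r → HasSum (fun n => a n * y ^ n) (f (c + y))) ∧ deriv f c = a 1 := by
  obtain ⟨p, R, hrR, hp⟩ := exists_hasFPowerSeriesOnBall_of_closedBall_subset hU hr hsub hf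
  refine ⟨p.coeff, ?_, fun y hy => ?_, hp.hasFPowerSeriesAt.deriv⟩
  · have hrad : (r.toNNReal : ℝ≥0∞) < p.radius :=
      lt_of_lt_of_le (by exact_mod_cast (Real.toNNReal_lt_iff_lt_coe hr).mpr hrR) hp.r_le
    simpa [p.norm_apply_eq_norm_coef, hr] using p.summable_norm_mul_pow hrad
  · have hy : y ∈ eball (0 : ℂ) R := by
      rw [eball_coe, mem_ball_zero_iff]; linarith
    simpa [mul_comm] using hp.hasSum hy

theorem Complex.exp_ofReal_two_pi_mul_div_mul_I (k N : ℕ) :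
    Complex.exp ((2 * π * k / N : ℝ) * Complex.I) = Complex.exp (2 * π * Complex.I / N) ^ k := by
  rw [← Complex.exp_nat_mul]
  push_cast
  ring_nf

/-- The `N`-point Riemann-sum estimator of the holomorphic-EP gradient, sampling the
circular nudging path at the scaled `N`-th roots of unity, converges to the exact
derivative as `N → ∞`. -/
theorem N_point_estimator_tendsto_deriv
    (r : ℝ) (hr : 0 < r)
    (f : ℂ → ℂ) (U : Set ℂ) (hU : IsOpen U)
    (hdisk : {z : ℂ | ‖z‖ ≤ r} ⊆ U)
    (hf : DifferentiableOn ℂ f U) :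
    Filter.Tendsto
      (fun N : ℕ =>
        (1 / ((N : ℂ) * (r : ℂ))) *
          ∑ k ∈ Finset.range N,
            f ((r : ℂ) * Complex.exp ((2 * π * k / N : ℝ) * Complex.I)) *
              Complex.exp (-((2 * π * k / N : ℝ) * Complex.I)))
      Filter.atTop (nhds (deriv f 0)) := by
  obtain ⟨a, hsum, hf_eq, hderiv⟩ := exists_hasSum_coeff_mul_pow_of_closedBall_subset hU hr.le
    (c := 0) (fun z hz => hdisk (by simpa using hz)) hf
  have hr0 : (r : ℂ) ≠ 0 := by exact_mod_cast hr.ne'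
  have hc : Summable fun n => ‖a (n + 1) * (r : ℂ) ^ n‖ := by
    refine ((summable_nat_add_iff 1).mpr hsum |>.div_const r).congr fun n => ?_
    rw [norm_mul, norm_pow, Complex.norm_real, Real.norm_of_nonneg hr.le, pow_succ]
    field_simp
  have hbias : ∀ N : ℕ, 2 ≤ N →
      circleDerivEstimate f r (Complex.exp (2 * π * Complex.I / N)) N - a 1 =
        ∑' m, a ((m + 1) * N + 1) * (r : ℂ) ^ ((m + 1) * N) := by
    intro N hN
    have hω := Complex.isPrimitiveRoot_exp N (by omega)
    refine circleDerivEstimate_sub_eq_tsum hr0 hN hω fun k => ?_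
    simpa using hf_eq _ (by simp [hω.norm'_eq_one (by omega), abs_of_pos hr])
  rw [hderiv, ← add_zero (a 1)]
  refine (tendsto_const_nhds.add (tendsto_tsum_comp_succ_mul_atTop_zero hc)).congr' ?_
  filter_upwards [eventually_ge_atTop 2] with N hN
  simp only [← hbias N hN, add_sub_cancel, circleDerivEstimate,
    Complex.exp_neg, Complex.exp_ofReal_two_pi_mul_div_mul_I]
end

section
/- Let r > 0 and T > 0, and let f : ℂ → ℂ be complex-differentiable on an open set U ⊆ ℂ containing the closed disk {z : ℂ | ‖z‖ ≤ r}. Assume f is real on the real axis: f(x) ∈ ℝ for every real x with |x| ≤ r. Then deriv f 0 = (2/(r·T)) · ∫_{t=0}^{T} Im(f(r·exp(2πi t / T))) · sin(2π t / T) dt, where the right-hand side is a real number regarded as a complex number. -/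
open scoped Real

open Complex Metric Filter Topology

/-! Write `g θ = f (r e^{iθ})`. Cauchy's formula gives `f' 0 = (2πr)⁻¹ ∫ e^{-iθ} g θ`
and Cauchy–Goursat gives `∫ e^{iθ} g θ = 0`; subtracting, `f' 0 = -(i / (πr)) ∫ sin θ · g θ`,
whose real part involves only `Im g`. Since `f` is real on the real axis, `f' 0` is real, and
the substitution `θ = 2πt / T` turns the integral over one turn into one over a teaching period. -/

theorem intervalIntegral.integral_zero_comp_mul_div {E : Type*} [NormedAddCommGroup E]
    [NormedSpace ℝ E] (g : ℝ → E) {a T : ℝ} (ha : a ≠ 0) (hT : T ≠ 0) :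
    ∫ t in (0 : ℝ)..T, g (a * t / T) = (T / a) • ∫ θ in (0 : ℝ)..a, g θ := by
  have hdiv (t : ℝ) : a * t / T = t / (T / a) := by field_simp
  simp only [hdiv]
  rw [intervalIntegral.integral_comp_div g (div_ne_zero hT ha), zero_div, div_div_cancel₀ hT]

theorem im_deriv_eq_zero_of_eventually_im_eq_zero {f : ℂ → ℂ} {x : ℝ}
    (hf : DifferentiableAt ℂ f x) (hreal : ∀ᶠ y : ℝ in 𝓝 x, (f y).im = 0) :
    (deriv f x).im = 0 := by
  have hderiv : HasDerivAt (fun y : ℝ => (f y).im) (deriv f x).im x :=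
    imCLM.hasFDerivAt.comp_hasDerivAt x hf.hasDerivAt.comp_ofReal
  rw [← hderiv.deriv, EventuallyEq.deriv_eq (f := fun _ => (0 : ℝ)) hreal, deriv_const]

theorem Complex.exp_neg_mul_I_sub_exp_mul_I (z : ℂ) :
    exp (-(z * I)) - exp (z * I) = -(2 * I * sin z) := by
  rw [sin, ← neg_mul]
  ring_nf
  rw [I_sq]
  ring

section circle

variable {f : ℂ → ℂ} {c : ℂ} {R : ℝ}

theorem ContinuousOn.continuous_comp_circleMap (hR : 0 ≤ R)
    (hf : ContinuousOn f (closedBall c R)) :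
    Continuous fun θ => f (circleMap c R θ) :=
  hf.comp_continuous (continuous_circleMap c R) (circleMap_mem_closedBall c hR)

theorem integral_exp_mul_circleMap_eq_zero (hR : 0 < R)
    (hf : DifferentiableOn ℂ f (closedBall c R)) :
    ∫ θ in (0 : ℝ)..2 * π, exp (θ * I) * f (circleMap c R θ) = 0 := by
  have hgoursat := (hf.mono closure_ball_subset_closedBall).diffContOnCl.circleIntegral_eq_zero
    hR.le
  simp only [circleIntegral, deriv_circleMap, circleMap_zero, smul_eq_mul, mul_assoc,
    mul_left_comm _ I, intervalIntegral.integral_const_mul] at hgoursat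
  simpa [hR.ne', I_ne_zero] using hgoursat

theorem deriv_eq_integral_exp_neg_mul_circleMap (hR : 0 < R)
    (hf : DifferentiableOn ℂ f (closedBall c R)) :
    deriv f c =
      (2 * π * R)⁻¹ * ∫ θ in (0 : ℝ)..2 * π, exp (-(θ * I)) * f (circleMap c R θ) := by
  have hcauchy := hf.deriv_eq_smul_circleIntegral hR
  have hπ : (π : ℂ) ≠ 0 := ofReal_ne_zero.mpr Real.pi_ne_zero
  have hR' : (R : ℂ) ≠ 0 := ofReal_ne_zero.mpr hR.ne'
  have hintegrand (θ : ℝ) : deriv (circleMap c R) θ • (1 / (circleMap c R θ - c) ^ 2) •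
      f (circleMap c R θ) = I / R * (exp (-(θ * I)) * f (circleMap c R θ)) := by
    have : exp (θ * I) ≠ 0 := exp_ne_zero _
    simp only [deriv_circleMap, circleMap_sub_center, circleMap_zero, smul_eq_mul, exp_neg]
    field_simp
  rw [circleIntegral, intervalIntegral.integral_congr fun θ _ => hintegrand θ,
    intervalIntegral.integral_const_mul, smul_eq_mul] at hcauchy
  rw [← mul_right_inj' two_pi_I_ne_zero, ← hcauchy]
  push_cast
  field_simp

theorem deriv_eq_integral_sin_mul_circleMap (hR : 0 < R)
    (hf : DifferentiableOn ℂ f (closedBall c R)) :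
    deriv f c =
      (π * R)⁻¹ * ∫ θ in (0 : ℝ)..2 * π, -(I * (Real.sin θ * f (circleMap c R θ))) := by
  have hg := hf.continuousOn.continuous_comp_circleMap hR.le
  have hint (u : ℝ → ℂ) (hu : Continuous u) :
      IntervalIntegrable (fun θ => u θ * f (circleMap c R θ)) MeasureTheory.volume 0 (2 * π) :=
    (hu.mul hg).intervalIntegrable _ _
  have hsub := intervalIntegral.integral_sub
    (hint _ (by fun_prop : Continuous fun θ : ℝ => exp (-(θ * I))))
    (hint _ (by fun_prop : Continuous fun θ : ℝ => exp (θ * I)))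
  rw [integral_exp_mul_circleMap_eq_zero hR hf, sub_zero] at hsub
  rw [deriv_eq_integral_exp_neg_mul_circleMap hR hf, ← hsub]
  have hrearrange (z w : ℂ) : -(2 * I * z) * w = 2 * -(I * (z * w)) := by ring
  simp only [← sub_mul, exp_neg_mul_I_sub_exp_mul_I, hrearrange, ofReal_sin,
    intervalIntegral.integral_const_mul]
  push_cast
  field_simp

theorem re_deriv_eq_integral_im_mul_sin (hR : 0 < R)
    (hf : DifferentiableOn ℂ f (closedBall c R)) :
    (deriv f c).re =
      (π * R)⁻¹ * ∫ θ in (0 : ℝ)..2 * π, (f (circleMap c R θ)).im * Real.sin θ := by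
  have hg := hf.continuousOn.continuous_comp_circleMap hR.le
  have hint : IntervalIntegrable (fun θ : ℝ => -(I * (Real.sin θ * f (circleMap c R θ))))
      MeasureTheory.volume 0 (2 * π) :=
    ((continuous_ofReal.comp Real.continuous_sin).mul hg).const_mul I |>.neg.intervalIntegrable _ _
  rw [deriv_eq_integral_sin_mul_circleMap hR hf, re_ofReal_mul, ← reCLM_apply,
    ← reCLM.intervalIntegral_comp_comm hint]
  congr 1
  refine intervalIntegral.integral_congr fun θ _ => ?_
  rw [reCLM_apply, neg_re, I_mul_re, neg_neg, im_ofReal_mul, mul_comm]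

end circle

theorem deriv_from_imaginary_part_sine_general
    (r T : ℝ) (hr : 0 < r) (hT : 0 < T)
    (f : ℂ → ℂ) (U : Set ℂ)
    (hdisk : {z : ℂ | ‖z‖ ≤ r} ⊆ U)
    (hf : DifferentiableOn ℂ f U)
    (hreal : ∀ x : ℝ, |x| ≤ r → (f (x : ℂ)).im = 0) :
    deriv f 0
      = (((2 / (r * T)) *
          ∫ t in (0 : ℝ)..T,
            (f ((r : ℂ) * Complex.exp ((2 * π * t / T : ℝ) * Complex.I))).im *
              Real.sin (2 * π * t / T) : ℝ) : ℂ) := by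
  have hf₀ : DifferentiableOn ℂ f (closedBall 0 r) :=
    hf.mono fun z hz => hdisk (mem_closedBall_zero_iff.mp hz)
  have him : (deriv f (0 : ℝ)).im = 0 := by
    refine im_deriv_eq_zero_of_eventually_im_eq_zero ?_ ?_
    · exact hf₀.differentiableAt (by simpa using closedBall_mem_nhds (0 : ℂ) hr)
    · filter_upwards [Icc_mem_nhds (neg_neg_iff_pos.mpr hr) hr] with x hx
      exact hreal x (abs_le.mpr hx)
  have hrescale := intervalIntegral.integral_zero_comp_mul_div
    (fun θ : ℝ => (f (r * exp (θ * I))).im * Real.sin θ) Real.two_pi_pos.ne' hT.ne'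
  apply Complex.ext
  · rw [re_deriv_eq_integral_im_mul_sin hr hf₀, ofReal_re, hrescale, smul_eq_mul]
    simp only [circleMap_zero, ← mul_assoc]
    congr 1
    field_simp
  · simpa only [ofReal_im, ofReal_zero] using him

/-- Appendix A.3: when `f` is real on the real axis, the exact gradient can equally be
recovered from the imaginary part alone of the complex oscillation along the circular
teaching path, by projecting against the sine of the teaching frequency. -/
theorem deriv_from_imaginary_part_sine
    (r T : ℝ) (hr : 0 < r) (hT : 0 < T)
    (f : ℂ → ℂ) (U : Set ℂ) (hU : IsOpen U)
    (hdisk : {z : ℂ | ‖z‖ ≤ r} ⊆ U)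
    (hf : DifferentiableOn ℂ f U)
    (hreal : ∀ x : ℝ, |x| ≤ r → (f (x : ℂ)).im = 0) :
    deriv f 0
      = (((2 / (r * T)) *
          ∫ t in (0 : ℝ)..T,
            (f ((r : ℂ) * Complex.exp ((2 * π * t / T : ℝ) * Complex.I))).im *
              Real.sin (2 * π * t / T) : ℝ) : ℂ) :=
  deriv_from_imaginary_part_sine_general r T hr hT f U hdisk hf hreal
end
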